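/- Let (f_ε)_{ε∈(0,1)} be any family of functions {0,1,2} → ℝ² such that for each ε ∈ (0,1), f_ε is a global minimizer of Q_ε over all functions f : {0,1,2} → ℝ². Then as ε → 0⁺, softmax(f_ε(0)) → (1/2, 1/2), softmax(f_ε(1)) → (2/3, 1/3), and softmax(f_ε(2)) → (1/3, 2/3). -/

import Mathlib

/-!
Write `a, b, c` for the margins `f x 0 - f x 1` at `x = 0, 1, 2` and `σ` for the sigmoid. The
`ε⁰` and `ε¹` parts of `Q_ε` are binary log-losses: of the prediction `σ (3a)` on a balanced
sample, and of `σ (-(2a + b))` and `σ (2a + c)` on samples with class proportions `1 : 2`. By a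
quantitative Gibbs inequality their excess over the minimum dominates the squared distance of
these predictions from `1/2`, `1/3`, `1/3`. All three minima are attained at once by the margins
`0, log 2, -log 2`, for which the remaining terms are `O(ε²)`; comparing a minimiser with this
competitor gives `σ (3a) - 1/2 = O(ε)` and `σ (-(2a + b)) - 1/3, σ (2a + c) - 1/3 = O(√ε)`.
Since `σ` is a topological embedding, the margins converge to `0, log 2, -log 2`, and the softmax
of a two-vector is `σ` of its margin.
-/

open Real Filter

/-- softmax of a vector `v ∈ ℝ^d`: `softmax v j = exp (v j) / ∑ m, exp (v m)`. -/
noncomputable def softmax {d : ℕ} (v : Fin d → ℝ) : Fin d → ℝ :=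
  fun j => Real.exp (v j) / ∑ m, Real.exp (v m)

/-- A single hard-OKO cross-entropy term on the summed logits of a set. -/
noncomputable def toyLoss (f : Fin 3 → Fin 2 → ℝ) (x₁ x₂ x₃ : Fin 3) (y : Fin 2) : ℝ :=
  -Real.log (softmax (fun j => f x₁ j + f x₂ j + f x₃ j) y)

/-- The toy hard OKO risk `Q_ε` over functions `f : {0,1,2} → ℝ²`
(class 1 is index 0, class 2 is index 1). -/
noncomputable def toyRisk (ε : ℝ) (f : Fin 3 → Fin 2 → ℝ) : ℝ :=
  (1 - ε) ^ 3 / 2 * (toyLoss f 0 0 0 0 + toyLoss f 0 0 0 1)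
  + ε * (1 - ε) ^ 2 / 2 *
      (toyLoss f 0 0 2 0 + toyLoss f 1 0 0 0 + toyLoss f 0 1 0 0
        + toyLoss f 0 0 1 1 + toyLoss f 2 0 0 1 + toyLoss f 0 2 0 1)
  + ε ^ 2 * (1 - ε) / 2 *
      (toyLoss f 1 1 0 0 + toyLoss f 1 0 2 0 + toyLoss f 0 1 2 0
        + toyLoss f 2 2 0 1 + toyLoss f 2 0 1 1 + toyLoss f 2 1 0 1)
  + ε ^ 3 / 2 * (toyLoss f 1 1 2 0 + toyLoss f 2 2 1 1)

open Topology Set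

lemma softmax_fin_two (v : Fin 2 → ℝ) :
    softmax v = ![sigmoid (v 0 - v 1), sigmoid (v 1 - v 0)] := by
  have key : ∀ x y : ℝ, exp x / (exp x + exp y) = sigmoid (x - y) := fun x y => by
    rw [sigmoid_def, neg_sub, exp_sub]
    field_simp
  ext j
  fin_cases j
  · simpa [softmax, Fin.sum_univ_two] using key (v 0) (v 1)
  · simpa [softmax, Fin.sum_univ_two, add_comm] using key (v 1) (v 0)

lemma tendsto_of_tendsto_sigmoid {α : Type*} {l : Filter α} {x : α → ℝ} {t : ℝ}
    (h : Tendsto (fun e => sigmoid (x e)) l (𝓝 (sigmoid t))) : Tendsto x l (𝓝 t) :=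
  (IsEmbedding.subtypeVal.comp Topology.isEmbedding_sigmoid).tendsto_nhds_iff.2 h

lemma sigmoid_log_two : sigmoid (log 2) = 2 / 3 := by
  rw [sigmoid_def, exp_neg, exp_log two_pos]; norm_num

lemma sigmoid_neg_log_two : sigmoid (-log 2) = 1 / 3 := by
  rw [sigmoid_neg, sigmoid_log_two]; norm_num

lemma tendsto_softmax_of_tendsto_sub {α : Type*} {l : Filter α} {g : α → Fin 2 → ℝ} {t : ℝ}
    (h : Tendsto (fun e => g e 0 - g e 1) l (𝓝 t)) :
    Tendsto (fun e => softmax (g e)) l (𝓝 ![sigmoid t, sigmoid (-t)]) := by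
  simp only [softmax_fin_two]
  refine tendsto_pi_nhds.2 (Fin.forall_fin_two.2 ⟨?_, ?_⟩) <;>
    simp only [Matrix.cons_val_zero, Matrix.cons_val_one]
  · exact (continuous_sigmoid.tendsto t).comp h
  · simpa only [neg_sub, Function.comp_def] using (continuous_sigmoid.tendsto (-t)).comp h.neg

def margin (f : Fin 3 → Fin 2 → ℝ) (x : Fin 3) : ℝ := f x 0 - f x 1

lemma toyLoss_zero (f : Fin 3 → Fin 2 → ℝ) (x₁ x₂ x₃ : Fin 3) :
    toyLoss f x₁ x₂ x₃ 0 = -log (sigmoid (margin f x₁ + margin f x₂ + margin f x₃)) := by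
  simp only [toyLoss, softmax_fin_two, margin, Matrix.cons_val_zero]
  ring_nf

lemma toyLoss_one (f : Fin 3 → Fin 2 → ℝ) (x₁ x₂ x₃ : Fin 3) :
    toyLoss f x₁ x₂ x₃ 1 = -log (sigmoid (-(margin f x₁ + margin f x₂ + margin f x₃))) := by
  simp only [toyLoss, softmax_fin_two, margin, Matrix.cons_val_one, Matrix.cons_val_zero]
  ring_nf

lemma toyLoss_nonneg (f : Fin 3 → Fin 2 → ℝ) (x₁ x₂ x₃ : Fin 3) (y : Fin 2) :
    0 ≤ toyLoss f x₁ x₂ x₃ y := by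
  rw [toyLoss, softmax_fin_two, neg_nonneg]
  fin_cases y <;> exact log_nonpos (sigmoid_nonneg _) (sigmoid_le_one _)

noncomputable def logLoss (k p : ℝ) : ℝ := -log p - k * log (1 - p)

lemma logLoss_one_half : logLoss 1 (1 / 2) = 2 * log 2 := by
  rw [logLoss, show (1 : ℝ) - 1 / 2 = 2⁻¹ by norm_num, one_div, log_inv]
  ring

lemma logLoss_two_third : logLoss 2 (1 / 3) = log (27 / 4) := by
  rw [logLoss, show (1 : ℝ) - 1 / 3 = 2 / 3 by norm_num,
    show (27 / 4 : ℝ) = 3 ^ 3 / 2 ^ 2 by norm_num, log_div, log_div, log_div, log_pow, log_pow,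
    log_one] <;> norm_num
  ring

lemma logLoss_one_ge {p : ℝ} (h0 : 0 < p) (h1 : p < 1) :
    2 * log 2 + 4 * (p - 1 / 2) ^ 2 ≤ logLoss 1 p := by
  have hq := sub_pos.2 h1
  have key := log_le_sub_one_of_pos (x := 2 ^ 2 * (p * (1 - p))) (by positivity)
  rw [log_mul (by positivity) (by positivity), log_mul h0.ne' hq.ne', log_pow] at key
  rw [logLoss]
  push_cast at key
  nlinarith

lemma logLoss_two_ge {p : ℝ} (h0 : 0 < p) (h1 : p < 1) :
    log (27 / 4) + 9 / 4 * (p - 1 / 3) ^ 2 ≤ logLoss 2 p := by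
  have hq := sub_pos.2 h1
  have key := log_le_sub_one_of_pos (x := 27 / 4 * (p * (1 - p) ^ 2)) (by positivity)
  rw [log_mul (by positivity) (by positivity), log_mul h0.ne' (by positivity), log_pow] at key
  rw [logLoss]
  push_cast at key
  nlinarith [mul_nonneg (sq_nonneg (p - 1 / 3)) hq.le]

noncomputable def leadRisk (ε a b c : ℝ) : ℝ :=
  (1 - ε) ^ 3 / 2 * logLoss 1 (sigmoid (3 * a))
    + ε * (1 - ε) ^ 2 / 2 *
      (logLoss 2 (sigmoid (-(2 * a + b))) + logLoss 2 (sigmoid (2 * a + c)))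

lemma leadRisk_margin (ε : ℝ) (f : Fin 3 → Fin 2 → ℝ) :
    leadRisk ε (margin f 0) (margin f 1) (margin f 2) =
      (1 - ε) ^ 3 / 2 * (toyLoss f 0 0 0 0 + toyLoss f 0 0 0 1)
      + ε * (1 - ε) ^ 2 / 2 *
        (toyLoss f 0 0 2 0 + toyLoss f 1 0 0 0 + toyLoss f 0 1 0 0
          + toyLoss f 0 0 1 1 + toyLoss f 2 0 0 1 + toyLoss f 0 2 0 1) := by
  simp only [leadRisk, logLoss, toyLoss_zero, toyLoss_one, ← sigmoid_neg]
  ring_nf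

lemma cubic_tail_mem_Icc {ε S₂ S₃ : ℝ} (hε : ε ∈ Icc 0 1) (h₂ : 0 ≤ S₂) (h₃ : 0 ≤ S₃) :
    ε ^ 2 * (1 - ε) / 2 * S₂ + ε ^ 3 / 2 * S₃ ∈ Icc 0 ((S₂ + S₃) / 2 * ε ^ 2) := by
  obtain ⟨h0, h1⟩ := hε
  have := sub_nonneg.2 h1
  constructor
  · positivity
  · nlinarith [mul_nonneg (sq_nonneg ε) (mul_nonneg h0 h₂),
      mul_nonneg (sq_nonneg ε) (mul_nonneg this h₃)]

lemma toyRisk_sub_leadRisk_mem_Icc (f : Fin 3 → Fin 2 → ℝ) :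
    ∃ K, ∀ ε ∈ Icc (0 : ℝ) 1,
      toyRisk ε f - leadRisk ε (margin f 0) (margin f 1) (margin f 2) ∈ Icc 0 (K * ε ^ 2) :=
  ⟨_, fun ε hε => by
    rw [toyRisk, ← leadRisk_margin, add_assoc, add_sub_cancel_left]
    exact cubic_tail_mem_Icc hε (by (repeat' apply add_nonneg) <;> apply toyLoss_nonneg)
      (add_nonneg (toyLoss_nonneg ..) (toyLoss_nonneg ..))⟩

lemma leadRisk_optimal_add_le {ε : ℝ} (hε : ε ∈ Icc 0 1) (a b c : ℝ) :
    leadRisk ε 0 (log 2) (-log 2)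
      + ((1 - ε) ^ 3 / 2 * (4 * (sigmoid (3 * a) - 1 / 2) ^ 2)
        + ε * (1 - ε) ^ 2 / 2 * (9 / 4 * (sigmoid (-(2 * a + b)) - 1 / 3) ^ 2
          + 9 / 4 * (sigmoid (2 * a + c) - 1 / 3) ^ 2))
      ≤ leadRisk ε a b c := by
  have hw₀ : 0 ≤ (1 - ε) ^ 3 / 2 := by have := sub_nonneg.2 hε.2; positivity
  have hw₁ : 0 ≤ ε * (1 - ε) ^ 2 / 2 := by have := hε.1; positivity
  calc _ = (1 - ε) ^ 3 / 2 * (2 * log 2 + 4 * (sigmoid (3 * a) - 1 / 2) ^ 2)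
        + ε * (1 - ε) ^ 2 / 2 *
          ((log (27 / 4) + 9 / 4 * (sigmoid (-(2 * a + b)) - 1 / 3) ^ 2)
            + (log (27 / 4) + 9 / 4 * (sigmoid (2 * a + c) - 1 / 3) ^ 2)) := by
        simp only [leadRisk, mul_zero, zero_add, sigmoid_zero, sigmoid_neg_log_two, ← one_div,
          logLoss_one_half, logLoss_two_third]
        ring
    _ ≤ leadRisk ε a b c := by
        unfold leadRisk
        gcongr <;> first
          | exact logLoss_one_ge (sigmoid_pos _) (sigmoid_lt_one _)
          | exact logLoss_two_ge (sigmoid_pos _) (sigmoid_lt_one _)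

lemma exists_minimizer_sq_sub_le : ∃ K, ∀ ε ∈ Ioo (0 : ℝ) (1 / 5), ∀ f : Fin 3 → Fin 2 → ℝ,
    (∀ g, toyRisk ε f ≤ toyRisk ε g) →
      (sigmoid (3 * margin f 0) - 1 / 2) ^ 2 ≤ K * ε ^ 2
      ∧ (sigmoid (-(2 * margin f 0 + margin f 1)) - 1 / 3) ^ 2 ≤ K * ε
      ∧ (sigmoid (2 * margin f 0 + margin f 2) - 1 / 3) ^ 2 ≤ K * ε := by
  let g : Fin 3 → Fin 2 → ℝ := ![![0, 0], ![log 2, 0], ![0, log 2]]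
  have hg : margin g 0 = 0 ∧ margin g 1 = log 2 ∧ margin g 2 = -log 2 := by
    simp [g, margin]
  obtain ⟨K, hK⟩ := toyRisk_sub_leadRisk_mem_Icc g
  have hK0 : 0 ≤ K := by
    have := hK 1 ⟨zero_le_one, le_rfl⟩
    simpa using this.1.trans this.2
  refine ⟨2 * K, fun ε ⟨h0, h1⟩ f hf => ?_⟩
  have hε : ε ∈ Icc 0 1 := ⟨h0.le, by linarith⟩
  obtain ⟨_, hf_tail⟩ := toyRisk_sub_leadRisk_mem_Icc f
  have hf_lead := leadRisk_optimal_add_le hε (margin f 0) (margin f 1) (margin f 2)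
  have hf_tail := (hf_tail ε hε).1
  have hg_tail := (hK ε hε).2
  rw [hg.1, hg.2.1, hg.2.2] at hg_tail
  set P₀ := (sigmoid (3 * margin f 0) - 1 / 2) ^ 2
  set P₁ := (sigmoid (-(2 * margin f 0 + margin f 1)) - 1 / 3) ^ 2
  set P₂ := (sigmoid (2 * margin f 0 + margin f 2) - 1 / 3) ^ 2
  have hsum : (1 - ε) ^ 3 / 2 * (4 * P₀) + ε * (1 - ε) ^ 2 / 2 * (9 / 4 * P₁ + 9 / 4 * P₂)
      ≤ K * ε ^ 2 := by
    linarith [hf g]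
  have hw₀ : 1 / 4 ≤ (1 - ε) ^ 3 / 2 := by nlinarith
  have hw₁ : ε / 4 ≤ ε * (1 - ε) ^ 2 / 2 := by nlinarith
  have hP₀ : 0 ≤ P₀ := sq_nonneg _
  have hP₁ : 0 ≤ P₁ := sq_nonneg _
  have hP₂ : 0 ≤ P₂ := sq_nonneg _
  have hKε : 0 ≤ K * ε := mul_nonneg hK0 h0.le
  have hP₁_le : 9 / 16 * P₁ ≤ K * ε := le_of_mul_le_mul_left (by nlinarith) h0
  have hP₂_le : 9 / 16 * P₂ ≤ K * ε := le_of_mul_le_mul_left (by nlinarith) h0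
  refine ⟨by nlinarith, by linarith, by linarith⟩

lemma tendsto_of_sq_sub_le {α : Type*} {l : Filter α} {x g : α → ℝ} {x₀ : ℝ}
    (h : ∀ᶠ e in l, (x e - x₀) ^ 2 ≤ g e) (hg : Tendsto g l (𝓝 0)) : Tendsto x l (𝓝 x₀) := by
  rw [tendsto_iff_norm_sub_tendsto_zero]
  refine squeeze_zero' (.of_forall fun _ => norm_nonneg _) (h.mono fun _ he => abs_le_sqrt he) ?_
  simpa [Function.comp_def] using (continuous_sqrt.tendsto 0).comp hg

lemma tendsto_margin_of_minimizer (fε : ℝ → Fin 3 → Fin 2 → ℝ)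
    (hmin : ∀ ε ∈ Ioo (0 : ℝ) 1, ∀ f, toyRisk ε (fε ε) ≤ toyRisk ε f) :
    Tendsto (fun ε => margin (fε ε) 0) (𝓝[>] 0) (𝓝 0)
      ∧ Tendsto (fun ε => margin (fε ε) 1) (𝓝[>] 0) (𝓝 (log 2))
      ∧ Tendsto (fun ε => margin (fε ε) 2) (𝓝[>] 0) (𝓝 (-log 2)) := by
  obtain ⟨K, hK⟩ := exists_minimizer_sq_sub_le
  have hbound : ∀ᶠ ε in 𝓝[>] (0 : ℝ), _ :=
    eventually_of_mem (Ioo_mem_nhdsGT (by norm_num : (0 : ℝ) < 1 / 5)) fun ε hε =>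
      hK ε hε (fε ε) (hmin ε ⟨hε.1, hε.2.trans (by norm_num)⟩)
  have hlin : Tendsto (fun ε : ℝ => K * ε) (𝓝[>] 0) (𝓝 0) :=
    tendsto_nhdsWithin_of_tendsto_nhds (by simpa using (continuous_id.tendsto 0).const_mul K)
  have hquad : Tendsto (fun ε : ℝ => K * ε ^ 2) (𝓝[>] 0) (𝓝 0) :=
    tendsto_nhdsWithin_of_tendsto_nhds (by simpa using ((continuous_pow 2).tendsto 0).const_mul K)
  have h₀ : Tendsto (fun ε => 3 * margin (fε ε) 0) (𝓝[>] 0) (𝓝 0) := by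
    refine tendsto_of_tendsto_sigmoid ?_
    rw [sigmoid_zero, ← one_div]
    exact tendsto_of_sq_sub_le (hbound.mono fun _ h => h.1) hquad
  have h₁ : Tendsto (fun ε => -(2 * margin (fε ε) 0 + margin (fε ε) 1)) (𝓝[>] 0)
      (𝓝 (-log 2)) := by
    refine tendsto_of_tendsto_sigmoid ?_
    rw [sigmoid_neg_log_two]
    exact tendsto_of_sq_sub_le (hbound.mono fun _ h => h.2.1) hlin
  have h₂ : Tendsto (fun ε => 2 * margin (fε ε) 0 + margin (fε ε) 2) (𝓝[>] 0) (𝓝 (-log 2)) := by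
    refine tendsto_of_tendsto_sigmoid ?_
    rw [sigmoid_neg_log_two]
    exact tendsto_of_sq_sub_le (hbound.mono fun _ h => h.2.2) hlin
  have h₀' := h₀.const_mul (2 / 3)
  rw [mul_zero] at h₀'
  refine ⟨by simpa using h₀.div_const 3, ?_, ?_⟩
  · simpa using (h₁.neg.sub h₀').congr fun ε => by ring
  · simpa using (h₂.sub h₀').congr fun ε => by ring

/-- Any family of global minimizers `f_ε` of the toy hard OKO risk satisfies, as
`ε → 0⁺`: `softmax (f_ε 0) → (1/2, 1/2)`, `softmax (f_ε 1) → (2/3, 1/3)` and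
`softmax (f_ε 2) → (1/3, 2/3)`. -/
theorem toyRisk_minimizers_limit (fε : ℝ → Fin 3 → Fin 2 → ℝ)
    (hmin : ∀ ε ∈ Set.Ioo (0 : ℝ) 1,
      ∀ f : Fin 3 → Fin 2 → ℝ, toyRisk ε (fε ε) ≤ toyRisk ε f) :
    Tendsto (fun ε => softmax (fε ε 0)) (nhdsWithin 0 (Set.Ioi 0))
        (nhds ![1 / 2, 1 / 2])
      ∧ Tendsto (fun ε => softmax (fε ε 1)) (nhdsWithin 0 (Set.Ioi 0))
          (nhds ![2 / 3, 1 / 3])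
      ∧ Tendsto (fun ε => softmax (fε ε 2)) (nhdsWithin 0 (Set.Ioi 0))
          (nhds ![1 / 3, 2 / 3]) := by
  obtain ⟨h₀, h₁, h₂⟩ := tendsto_margin_of_minimizer fε hmin
  refine ⟨?_, ?_, ?_⟩
  · simpa [sigmoid_zero] using tendsto_softmax_of_tendsto_sub h₀
  · simpa [sigmoid_log_two, sigmoid_neg_log_two] using tendsto_softmax_of_tendsto_sub h₁
  · simpa [sigmoid_log_two, sigmoid_neg_log_two] using tendsto_softmax_of_tendsto_sub h₂
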